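/- Let W₁, ..., W_m be finite groups, V_i a finite-dimensional Q-representation of W_i, V = V₁ ⊕ ... ⊕ V_m with the product action of W = W₁ × ... × W_m. Let L ⊂ V be a W-invariant finitely generated free abelian subgroup. If L is a quasi-permutation W-lattice, then for each i the lattice L_i := L ∩ V_i is a quasi-permutation W_i-lattice. -/

import Mathlib

/-! Basic definitions: Γ-lattices, permutation / quasi-permutation / invertible /
quasi-invertible lattices, group cohomology via inhomogeneous cochains,
Tate–Shafarevich groups, and the lattice `J_Γ = ℤ[Γ]/ℤ`. -/

/-- A bundled additive module with an action of the group `Γ`. -/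
structure GammaMod (Γ : Type) [Group Γ] : Type 1 where
  carrier : Type
  [acg : AddCommGroup carrier]
  [act : DistribMulAction Γ carrier]

attribute [instance] GammaMod.acg GammaMod.act

section Lattices

variable {Γ : Type} [Group Γ]

/-- A permutation `Γ`-lattice: it admits a finite `ℤ`-basis permuted by `Γ`. -/
def IsPermutation (P : GammaMod Γ) : Prop :=
  ∃ (ι : Type) (_ : Fintype ι) (b : Module.Basis ι ℤ P.carrier),
    ∀ (γ : Γ) (i : ι), ∃ j, γ • (b i) = b j

/-- A `Γ`-equivariant additive map. -/
def IsEquivariant {A B : GammaMod Γ} (f : A.carrier →+ B.carrier) : Prop :=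
  ∀ (γ : Γ) (x : A.carrier), f (γ • x) = γ • f x

/-- `0 → A → B → C → 0` is short exact. -/
def IsShortExact {A B C : GammaMod Γ} (f : A.carrier →+ B.carrier)
    (g : B.carrier →+ C.carrier) : Prop :=
  Function.Injective f ∧ Function.Surjective g ∧ ∀ y, g y = 0 ↔ y ∈ Set.range f

/-- A quasi-permutation `Γ`-lattice: it fits into a short exact sequence
`0 → L → P → P' → 0` with `P`, `P'` permutation lattices. -/
def IsQuasiPermutation (L : GammaMod Γ) : Prop :=
  ∃ (P P' : GammaMod Γ), IsPermutation P ∧ IsPermutation P' ∧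
    ∃ (f : L.carrier →+ P.carrier) (g : P.carrier →+ P'.carrier),
      IsEquivariant f ∧ IsEquivariant g ∧ IsShortExact f g

/-- `A` is a direct summand of `B` (equivariantly). -/
def IsDirectSummandOf (A B : GammaMod Γ) : Prop :=
  ∃ (i : A.carrier →+ B.carrier) (r : B.carrier →+ A.carrier),
    IsEquivariant i ∧ IsEquivariant r ∧ r.comp i = AddMonoidHom.id _

/-- An invertible `Γ`-lattice: a direct summand of a permutation lattice. -/
def IsInvertibleLat (I : GammaMod Γ) : Prop :=
  ∃ P : GammaMod Γ, IsPermutation P ∧ IsDirectSummandOf I P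

/-- A quasi-invertible `Γ`-lattice: a direct summand of a quasi-permutation lattice. -/
def IsQuasiInvertible (L : GammaMod Γ) : Prop :=
  ∃ Q : GammaMod Γ, IsQuasiPermutation Q ∧ IsDirectSummandOf L Q

end Lattices

/-- The action of `G` on an invariant additive subgroup. -/
def subAction {G M : Type} [Group G] [AddCommGroup M] [DistribMulAction G M]
    (S : AddSubgroup M) (h : ∀ (g : G) (x : M), x ∈ S → g • x ∈ S) :
    DistribMulAction G S where
  smul g x := ⟨g • (x : M), h g x x.2⟩
  one_smul x := Subtype.ext (one_smul G (x : M))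
  mul_smul g g' x := Subtype.ext (mul_smul g g' (x : M))
  smul_zero g := Subtype.ext (smul_zero g)
  smul_add g x y := Subtype.ext (smul_add g (x : M) (y : M))

section Cohomology

variable (G : Type) [Group G] (M : Type) [AddCommGroup M] [DistribMulAction G M]

/-- Inhomogeneous 2-cocycle condition. -/
def IsCocycle2 (f : G → G → M) : Prop :=
  ∀ g h k : G, g • f h k + f g (h * k) = f (g * h) k + f g h

/-- Inhomogeneous 2-coboundary condition. -/
def IsCoboundary2 (f : G → G → M) : Prop :=
  ∃ φ : G → M, ∀ g h : G, f g h = g • φ h + φ g - φ (g * h)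

/-- Inhomogeneous 3-cocycle condition. -/
def IsCocycle3 (f : G → G → G → M) : Prop :=
  ∀ g h k l : G,
    g • f h k l + f g (h * k) l + f g h k = f (g * h) k l + f g h (k * l)

/-- Inhomogeneous 3-coboundary condition. -/
def IsCoboundary3 (f : G → G → G → M) : Prop :=
  ∃ φ : G → G → M, ∀ g h k : G,
    f g h k = g • φ h k - φ (g * h) k + φ g (h * k) - φ g h

/-- The subgroup of 2-cocycles. -/
def cocycles2 : AddSubgroup (G → G → M) where
  carrier := {f | IsCocycle2 G M f}
  add_mem' := by
    intro f g hf hg a b c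
    have := congrArg₂ (· + ·) (hf a b c) (hg a b c)
    simp only [Pi.add_apply, smul_add]
    abel_nf at this ⊢
    exact this
  zero_mem' := by intro a b c; simp
  neg_mem' := by
    intro f hf a b c
    have := congrArg Neg.neg (hf a b c)
    simp only [Pi.neg_apply, smul_neg]
    abel_nf at this ⊢
    exact this

/-- The subgroup of 2-coboundaries. -/
def coboundaries2 : AddSubgroup (G → G → M) where
  carrier := {f | IsCoboundary2 G M f}
  add_mem' := by
    rintro f g ⟨φ, hφ⟩ ⟨ψ, hψ⟩
    refine ⟨φ + ψ, fun a b => ?_⟩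
    simp only [Pi.add_apply, smul_add, hφ a b, hψ a b]
    abel
  zero_mem' := ⟨0, by intro a b; simp⟩
  neg_mem' := by
    rintro f ⟨φ, hφ⟩
    refine ⟨-φ, fun a b => ?_⟩
    simp only [Pi.neg_apply, smul_neg, hφ a b]
    abel

/-- The subgroup of 3-cocycles. -/
def cocycles3 : AddSubgroup (G → G → G → M) where
  carrier := {f | IsCocycle3 G M f}
  add_mem' := by
    intro f g hf hg a b c d
    have := congrArg₂ (· + ·) (hf a b c d) (hg a b c d)
    simp only [Pi.add_apply, smul_add]
    abel_nf at this ⊢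
    exact this
  zero_mem' := by intro a b c d; simp
  neg_mem' := by
    intro f hf a b c d
    have := congrArg Neg.neg (hf a b c d)
    simp only [Pi.neg_apply, smul_neg]
    abel_nf at this ⊢
    exact this

/-- The subgroup of 3-coboundaries. -/
def coboundaries3 : AddSubgroup (G → G → G → M) where
  carrier := {f | IsCoboundary3 G M f}
  add_mem' := by
    rintro f g ⟨φ, hφ⟩ ⟨ψ, hψ⟩
    refine ⟨φ + ψ, fun a b c => ?_⟩
    simp only [Pi.add_apply, smul_add, hφ a b c, hψ a b c]
    abel
  zero_mem' := ⟨0, by intro a b c; simp⟩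
  neg_mem' := by
    rintro f ⟨φ, hφ⟩
    refine ⟨-φ, fun a b c => ?_⟩
    simp only [Pi.neg_apply, smul_neg, hφ a b c]
    abel

/-- Third group cohomology `H³(G, M)`, via inhomogeneous cochains. -/
abbrev H3 := cocycles3 G M ⧸ ((coboundaries3 G M).addSubgroupOf (cocycles3 G M))

/-- The subgroup of 2-cocycles whose restriction to every cyclic subgroup is a
coboundary. -/
def shaCocycles : AddSubgroup (G → G → M) where
  carrier := {f | IsCocycle2 G M f ∧ ∀ (C : Subgroup G), IsCyclic C →
      IsCoboundary2 C M (fun a b : C => f a b)}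
  add_mem' := by
    rintro f g ⟨hf1, hf2⟩ ⟨hg1, hg2⟩
    refine ⟨(cocycles2 G M).add_mem hf1 hg1, fun C hC => ?_⟩
    obtain ⟨φ, hφ⟩ := hf2 C hC
    obtain ⟨ψ, hψ⟩ := hg2 C hC
    refine ⟨φ + ψ, fun a b => ?_⟩
    simp only [Pi.add_apply, smul_add, hφ a b, hψ a b]
    abel
  zero_mem' := by
    refine ⟨(cocycles2 G M).zero_mem, fun C hC => ⟨0, by intro a b; simp⟩⟩
  neg_mem' := by
    rintro f ⟨hf1, hf2⟩
    refine ⟨(cocycles2 G M).neg_mem hf1, fun C hC => ?_⟩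
    obtain ⟨φ, hφ⟩ := hf2 C hC
    refine ⟨-φ, fun a b => ?_⟩
    simp only [Pi.neg_apply, smul_neg, hφ a b]
    abel

/-- The Tate–Shafarevich group `Ш²(G, M)`: the kernel of
`H²(G,M) → ∏_C H²(C,M)` over all cyclic subgroups `C ⊆ G`, realized as
(locally trivial 2-cocycles) / (2-coboundaries). -/
abbrev Sha2 := shaCocycles G M ⧸ ((coboundaries2 G M).addSubgroupOf (shaCocycles G M))

end Cohomology

/-- `M` with the trivial action of `G`. -/
def TrivAct (G M : Type) : Type := M

instance (G M : Type) [AddCommGroup M] : AddCommGroup (TrivAct G M) :=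
  inferInstanceAs (AddCommGroup M)

instance (G M : Type) [Group G] [AddCommGroup M] : DistribMulAction G (TrivAct G M) where
  smul _ m := m
  one_smul _ := rfl
  mul_smul _ _ _ := rfl
  smul_zero _ := rfl
  smul_add _ _ _ := rfl

section JGamma

/-- The subgroup of `ℤ[Γ] = (Γ → ℤ)` generated by the norm element `∑_{s∈Γ} s`
(the constant function `1`). -/
def normSub (Γ : Type) : AddSubgroup (Γ → ℤ) :=
  AddSubgroup.zmultiples (fun _ => (1 : ℤ))

/-- The lattice `J_Γ = ℤ[Γ]/ℤ`, the cokernel of the norm map `ℤ → ℤ[Γ]`.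
Here `ℤ[Γ]` is modelled as functions `Γ → ℤ` with `Γ` acting by left translation;
the norm element is the constant function `1`. -/
abbrev JLat (Γ : Type) := (Γ → ℤ) ⧸ normSub Γ

variable {Γ : Type} [Group Γ]

/-- Left translation on `ℤ[Γ] = (Γ → ℤ)`. -/
def shiftHom (g : Γ) : (Γ → ℤ) →+ (Γ → ℤ) where
  toFun f := fun h => f (g⁻¹ * h)
  map_zero' := rfl
  map_add' _ _ := rfl

instance : DistribMulAction Γ (JLat Γ) where
  smul g := fun x => QuotientAddGroup.map _ _ (shiftHom g)
    (by rintro f ⟨n, rfl⟩; exact ⟨n, rfl⟩) x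
  one_smul := by
    intro x
    refine QuotientAddGroup.induction_on x fun f => ?_
    show QuotientAddGroup.map _ _ _ _ _ = _
    rw [QuotientAddGroup.map_mk]
    congr 1
    funext h
    simp [shiftHom]
  mul_smul := by
    intro g g' x
    refine QuotientAddGroup.induction_on x fun f => ?_
    show QuotientAddGroup.map _ _ _ _ _ =
      QuotientAddGroup.map _ _ _ _ (QuotientAddGroup.map _ _ _ _ _)
    rw [QuotientAddGroup.map_mk, QuotientAddGroup.map_mk, QuotientAddGroup.map_mk]
    congr 1
    funext h
    simp [shiftHom, mul_assoc]
  smul_zero := by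
    intro g
    exact map_zero (QuotientAddGroup.map _ _ (shiftHom g)
      (by rintro f ⟨n, rfl⟩; exact ⟨n, rfl⟩))
  smul_add := by
    intro g x y
    exact map_add (QuotientAddGroup.map _ _ (shiftHom g)
      (by rintro f ⟨n, rfl⟩; exact ⟨n, rfl⟩)) x y

end JGamma


/-- The additive subgroup of a product consisting of tuples vanishing away from `i`. -/
def zeroOff (m : ℕ) (V : Fin m → Type) [∀ i, AddCommGroup (V i)] (i : Fin m) :
    AddSubgroup (∀ k, V k) where
  carrier := {x | ∀ k, k ≠ i → x k = 0}
  add_mem' := by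
    intro a b ha hb k hk
    simp [Pi.add_apply, ha k hk, hb k hk]
  zero_mem' := fun _ _ => rfl
  neg_mem' := by
    intro a ha k hk
    simp [Pi.neg_apply, ha k hk]

/-- `L ∩ V_i`, for `L` a subgroup of `V = V₁ ⊕ ⋯ ⊕ V_m`. -/
def Lsect (m : ℕ) (V : Fin m → Type) [∀ i, AddCommGroup (V i)]
    (L : AddSubgroup (∀ k, V k)) (i : Fin m) : AddSubgroup (∀ k, V k) :=
  L ⊓ zeroOff m V i

/-!
Restricted to `W_i`, `L` is still a quasi-permutation lattice, `0 → L → P → P' → 0`, and `W_i`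
acts trivially on the torsion-free lattice `L / L_i`, since `w • y - y` is supported on `V_i`.
Dividing `P` by the image of `L_i` gives `0 → L_i → P → N → 0` together with an extension
`0 → L / L_i → N → P' → 0`. Such an extension splits equivariantly: if `γ` fixes the image of
`x ∈ N` in `P'`, then `d = γ • x - x` lies in `L / L_i`, so `γ` fixes `d` and `γ ^ n • x = x + n • d`;
taking `n` the order of `γ` gives `d = 0`. Hence lifting one point of each orbit of `P'` and
transporting the lift along the orbit is well defined, and extending it additively from the
permutation basis of `P'` splits `N ≅ L / L_i ⊕ P'`, a permutation lattice.
-/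

open Function

theorem Module.Basis.addMonoidHom_ext {ι M X : Type} [AddCommGroup M] [AddCommGroup X]
    (b : Module.Basis ι ℤ M) {f₁ f₂ : M →+ X} (h : ∀ i, f₁ (b i) = f₂ (b i)) : f₁ = f₂ :=
  AddMonoidHom.toIntLinearMap_injective (b.ext h)

theorem QuotientAddGroup.isAddTorsionFree_of_nsmul_mem {G : Type} [AddCommGroup G]
    (H : AddSubgroup G) (h : ∀ (n : ℕ) (x : G), n ≠ 0 → n • x ∈ H → x ∈ H) :
    IsAddTorsionFree (G ⧸ H) := by
  refine ⟨fun n hn a b hab => ?_⟩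
  induction a using QuotientAddGroup.induction_on
  induction b using QuotientAddGroup.induction_on
  simp only [← QuotientAddGroup.mk_nsmul, QuotientAddGroup.eq_iff_sub_mem, ← nsmul_sub] at hab ⊢
  exact h n _ hn hab

theorem isAddTorsionFree_quotient_range_comp {M L P P' : Type} [AddCommGroup M] [AddCommGroup L]
    [AddCommGroup P] [AddCommGroup P'] [IsAddTorsionFree P'] {j : M →+ L} {f : L →+ P}
    {g : P →+ P'} (hf : Injective f) (hfg : ∀ x, g x = 0 ↔ x ∈ Set.range f)
    (htf : ∀ (n : ℕ) (y : L), n ≠ 0 → n • y ∈ j.range → y ∈ j.range) :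
    IsAddTorsionFree (P ⧸ (f.comp j).range) := by
  refine QuotientAddGroup.isAddTorsionFree_of_nsmul_mem _ fun n x hn ⟨z, hz⟩ => ?_
  have hgx : g x = 0 := by
    have : n • g x = 0 := by rw [← map_nsmul, ← hz]; exact (hfg _).mpr ⟨j z, rfl⟩
    exact (nsmul_eq_zero_iff_right hn).mp this
  obtain ⟨y, rfl⟩ := (hfg x).mp hgx
  rw [AddMonoidHom.comp_apply, ← map_nsmul] at hz
  obtain ⟨z', rfl⟩ := htf n y hn ⟨z, hf hz⟩
  exact ⟨z', rfl⟩

namespace GammaMod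

variable {Γ Γ' : Type} [Group Γ] [Group Γ']

def comap (φ : Γ' →* Γ) (A : GammaMod Γ) : GammaMod Γ' :=
  @GammaMod.mk Γ' _ A.carrier _ (DistribMulAction.compHom _ φ)

def quotient (A : GammaMod Γ) (K : AddSubgroup A.carrier)
    (hK : ∀ (γ : Γ) (x : A.carrier), x ∈ K → γ • x ∈ K) : GammaMod Γ :=
  @GammaMod.mk Γ _ (A.carrier ⧸ K) _
    { smul γ := QuotientAddGroup.map K K (DistribSMul.toAddMonoidHom A.carrier γ) (hK γ ·)
      one_smul x := QuotientAddGroup.induction_on x fun a =>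
        congrArg QuotientAddGroup.mk (one_smul Γ a)
      mul_smul γ δ x := QuotientAddGroup.induction_on x fun a =>
        congrArg QuotientAddGroup.mk (mul_smul γ δ a)
      smul_zero _ := map_zero _
      smul_add _ := map_add _ }

end GammaMod

section Restriction

variable {Γ Γ' : Type} [Group Γ] [Group Γ']

theorem IsEquivariant.comap {A B : GammaMod Γ} {f : A.carrier →+ B.carrier}
    (hf : IsEquivariant f) (φ : Γ' →* Γ) :
    IsEquivariant (A := A.comap φ) (B := B.comap φ) f :=
  fun γ => hf (φ γ)

theorem IsPermutation.comap {P : GammaMod Γ} (hP : IsPermutation P) (φ : Γ' →* Γ) :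
    IsPermutation (P.comap φ) :=
  let ⟨ι, hι, b, hb⟩ := hP
  ⟨ι, hι, b, fun γ => hb (φ γ)⟩

theorem IsQuasiPermutation.comap {L : GammaMod Γ} (hL : IsQuasiPermutation L) (φ : Γ' →* Γ) :
    IsQuasiPermutation (L.comap φ) :=
  let ⟨P, P', hP, hP', f, g, hf, hg, hfg⟩ := hL
  ⟨P.comap φ, P'.comap φ, hP.comap φ, hP'.comap φ, f, g, hf.comap φ, hg.comap φ, hfg⟩

end Restriction

theorem IsPermutation.isAddTorsionFree {Γ : Type} [Group Γ] {P : GammaMod Γ}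
    (hP : IsPermutation P) : IsAddTorsionFree P.carrier :=
  let ⟨_, _, b, _⟩ := hP
  have : Module.Free ℤ P.carrier := .of_basis b
  Module.isTorsionFree_int_iff_isAddTorsionFree.mp inferInstance

section Splitting

variable {Γ : Type} [Group Γ] {N P : GammaMod Γ} {g : N.carrier →+ P.carrier}

theorem IsEquivariant.smul_eq_self_of_smul_apply_eq_self [Finite Γ] [IsAddTorsionFree N.carrier]
    (hg : IsEquivariant g) (hfix : ∀ (γ : Γ) (x : N.carrier), g x = 0 → γ • x = x)
    {γ : Γ} {x : N.carrier} (hx : γ • g x = g x) : γ • x = x := by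
  set d := γ • x - x with hd_def
  have hd : γ • d = d := hfix γ d (by rw [map_sub, hg, hx, sub_self])
  have hpow (n : ℕ) : γ ^ n • x = x + n • d := by
    induction n with
    | zero => simp
    | succ n ih => rw [pow_succ', mul_smul, ih, smul_add, smul_comm, hd, succ_nsmul, hd_def]; abel
  have hord := hpow (orderOf γ)
  rwa [pow_orderOf_eq_one, one_smul, left_eq_add,
    nsmul_eq_zero_iff_right (orderOf_pos γ).ne', sub_eq_zero] at hord

theorem IsEquivariant.exists_equivariant_section [Finite Γ] [IsAddTorsionFree N.carrier]
    (hg : IsEquivariant g) (hsurj : Surjective g)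
    (hfix : ∀ (γ : Γ) (x : N.carrier), g x = 0 → γ • x = x) :
    ∃ u : P.carrier → N.carrier, (∀ p, g (u p) = p) ∧ ∀ (γ : Γ) p, u (γ • p) = γ • u p := by
  let rep (p : P.carrier) : P.carrier := (Quotient.mk (MulAction.orbitRel Γ P.carrier) p).out
  have hrep (p : P.carrier) : ∃ γ : Γ, γ • rep p = p :=
    MulAction.mem_orbit_symm.mp (Quotient.mk_out (s := MulAction.orbitRel Γ P.carrier) p)
  have hrep_smul (γ : Γ) (p : P.carrier) : rep (γ • p) = rep p :=
    congrArg Quotient.out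
      (Quotient.sound (s := MulAction.orbitRel Γ P.carrier) (MulAction.mem_orbit p γ))
  choose w hw using hrep
  refine ⟨fun p => w p • surjInv hsurj (rep p), fun p => by rw [hg, surjInv_eq hsurj, hw],
    fun γ p => ?_⟩
  have hstab : ((w (γ • p))⁻¹ * γ * w p) • g (surjInv hsurj (rep p)) =
      g (surjInv hsurj (rep p)) := by
    rw [surjInv_eq hsurj, mul_smul, mul_smul, hw, inv_smul_eq_iff, ← hrep_smul γ p, hw]
  have := hg.smul_eq_self_of_smul_apply_eq_self hfix hstab
  rw [mul_smul, mul_smul, inv_smul_eq_iff] at this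
  simp only [hrep_smul, this]

theorem IsPermutation.exists_equivariant_addMonoidHom_section [Finite Γ]
    [IsAddTorsionFree N.carrier] (hP : IsPermutation P) (hg : IsEquivariant g)
    (hsurj : Surjective g) (hfix : ∀ (γ : Γ) (x : N.carrier), g x = 0 → γ • x = x) :
    ∃ s : P.carrier →+ N.carrier, IsEquivariant s ∧ g.comp s = .id _ := by
  obtain ⟨u, hgu, hu⟩ := hg.exists_equivariant_section hsurj hfix
  obtain ⟨ι, _, b, hb⟩ := hP
  let s : P.carrier →+ N.carrier := (b.constr ℤ (u ∘ b)).toAddMonoidHom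
  have hs (i : ι) : s (b i) = u (b i) := b.constr_basis ℤ (u ∘ b) i
  refine ⟨s, fun γ => DFunLike.congr_fun (b.addMonoidHom_ext (f₁ := s.comp
      (DistribSMul.toAddMonoidHom _ γ)) (f₂ := (DistribSMul.toAddMonoidHom _ γ).comp s)
      fun i => ?_), b.addMonoidHom_ext fun i => by simp [hs, hgu]⟩
  obtain ⟨j, hj⟩ := hb γ i
  simp [hj, hs, ← hu]

theorem IsPermutation.of_equivariant_section [Module.Finite ℤ N.carrier]
    [IsAddTorsionFree N.carrier] (hP : IsPermutation P) {s : P.carrier →+ N.carrier}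
    (hs : IsEquivariant s) (hgs : g.comp s = .id _)
    (hfix : ∀ (γ : Γ) (x : N.carrier), g x = 0 → γ • x = x) :
    IsPermutation N := by
  obtain ⟨ι, _, b, hb⟩ := hP
  let K := LinearMap.ker g.toIntLinearMap
  let bK := Module.Free.chooseBasis ℤ K
  let e := ((LinearMap.exact_subtype_ker_map g.toIntLinearMap).splitSurjectiveEquiv
    K.injective_subtype ⟨s.toIntLinearMap, congrArg AddMonoidHom.toIntLinearMap hgs⟩).1
  have he (x : K × P.carrier) : e.symm x = x.1 + s x.2 := rfl
  refine ⟨_, inferInstance, (bK.prod b).map e.symm, fun γ => ?_⟩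
  rintro (k | i)
  · refine ⟨.inl k, ?_⟩
    simp only [Module.Basis.map_apply, Module.Basis.prod_apply, Sum.elim_inl, he]
    simp [hfix γ _ (bK k).2]
  · obtain ⟨j, hj⟩ := hb γ i
    refine ⟨.inr j, ?_⟩
    simp only [Module.Basis.map_apply, Module.Basis.prod_apply, Sum.elim_inr, he]
    simp [← hs γ, hj]

theorem IsPermutation.of_surjective [Finite Γ] [Module.Finite ℤ N.carrier]
    [IsAddTorsionFree N.carrier] (hP : IsPermutation P) (hg : IsEquivariant g)
    (hsurj : Surjective g) (hfix : ∀ (γ : Γ) (x : N.carrier), g x = 0 → γ • x = x) :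
    IsPermutation N :=
  let ⟨_, hs, hgs⟩ := hP.exists_equivariant_addMonoidHom_section hg hsurj hfix
  hP.of_equivariant_section hs hgs hfix

end Splitting

theorem IsQuasiPermutation.of_injective {Γ : Type} [Group Γ] [Finite Γ] {M L : GammaMod Γ}
    (hL : IsQuasiPermutation L) {j : M.carrier →+ L.carrier} (hj : IsEquivariant j)
    (hinj : Injective j) (hfix : ∀ (γ : Γ) (y : L.carrier), γ • y - y ∈ j.range)
    (htf : ∀ (n : ℕ) (y : L.carrier), n ≠ 0 → n • y ∈ j.range → y ∈ j.range) :
    IsQuasiPermutation M := by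
  obtain ⟨P, P', hP, hP', f, g, hf, hg, hfinj, hgsurj, hfg⟩ := hL
  let K := (f.comp j).range
  have hK (γ : Γ) (x : P.carrier) (hx : x ∈ K) : γ • x ∈ K := by
    obtain ⟨z, rfl⟩ := hx
    exact ⟨γ • z, by simp [hj γ z, hf γ (j z)]⟩
  have hKg : K ≤ g.ker := by
    rintro _ ⟨z, rfl⟩
    exact (hfg _).mpr ⟨j z, rfl⟩
  let N := P.quotient K hK
  have hN : IsPermutation N := by
    obtain ⟨_, _, b, _⟩ := hP
    have : Module.Finite ℤ P.carrier := .of_basis b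
    have : Module.Finite ℤ N.carrier :=
      .of_surjective (QuotientAddGroup.mk' K).toIntLinearMap (QuotientAddGroup.mk'_surjective K)
    have := hP'.isAddTorsionFree
    have : IsAddTorsionFree N.carrier := isAddTorsionFree_quotient_range_comp hfinj hfg htf
    refine hP'.of_surjective (g := QuotientAddGroup.lift K g hKg) (fun γ x => ?_)
      (QuotientAddGroup.lift_surjective_of_surjective _ _ hgsurj _) (fun γ x hx => ?_)
    · induction x using QuotientAddGroup.induction_on
      exact hg γ _
    · induction x using QuotientAddGroup.induction_on with | H x => ?_
      obtain ⟨y, rfl⟩ := (hfg x).mp hx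
      obtain ⟨z, hz⟩ := hfix γ y
      exact (QuotientAddGroup.eq_iff_sub_mem (N := K)).mpr ⟨z, by simp [hz, hf γ y]⟩
  exact ⟨P, N, hP, hN, f.comp j, QuotientAddGroup.mk' K, fun γ z => by simp [hj γ z, hf γ (j z)],
    fun _ _ => rfl, hfinj.comp hinj, QuotientAddGroup.mk'_surjective K,
    fun x => QuotientAddGroup.eq_zero_iff x⟩

theorem quasiPermutation_inter_component_general (m : ℕ) (W : Fin m → Type)
    [∀ i, Group (W i)] [∀ i, Finite (W i)]
    (V : Fin m → Type) [∀ i, AddCommGroup (V i)] [∀ i, Module ℚ (V i)]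
    [∀ i, DistribMulAction (W i) (V i)]
    (L : AddSubgroup (∀ k, V k))
    (hinv : ∀ (w : ∀ k, W k) (x : ∀ k, V k), x ∈ L → w • x ∈ L)
    (hqp : IsQuasiPermutation (Γ := ∀ k, W k)
      (@GammaMod.mk _ _ L _ (subAction L hinv)))
    (i : Fin m) :
    letI : DistribMulAction (W i) (∀ k, V k) :=
      DistribMulAction.compHom _ (MonoidHom.mulSingle W i)
    ∃ hi : ∀ (w : W i) (x : ∀ k, V k), x ∈ Lsect m V L i → w • x ∈ Lsect m V L i,
      IsQuasiPermutation (Γ := W i)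
        (@GammaMod.mk _ _ (Lsect m V L i) _ (subAction _ hi)) := by
  let : DistribMulAction (W i) (∀ k, V k) := DistribMulAction.compHom _ (MonoidHom.mulSingle W i)
  have hsmul_apply (w : W i) (x : ∀ k, V k) (k : Fin m) (hk : k ≠ i) : (w • x) k = x k :=
    show (MonoidHom.mulSingle W i w • x) k = x k by simp [Pi.mulSingle_eq_of_ne hk]
  have hi (w : W i) (x : ∀ k, V k) (hx : x ∈ Lsect m V L i) : w • x ∈ Lsect m V L i :=
    ⟨hinv _ x hx.1, fun k hk => (hsmul_apply w x k hk).trans (hx.2 k hk)⟩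
  refine ⟨hi, (hqp.comap (MonoidHom.mulSingle W i)).of_injective
    (j := AddSubgroup.inclusion inf_le_left) (fun _ _ => rfl)
    (AddSubgroup.inclusion_injective _) (fun w (y : L) => ?_) (fun n (y : L) hn ⟨z, hz⟩ => ?_)⟩
  · refine ⟨⟨w • (y : ∀ k, V k) - y, L.sub_mem (hinv _ _ y.2) y.2, fun k hk => ?_⟩, rfl⟩
    exact sub_eq_zero.mpr (hsmul_apply w y k hk)
  · have (k : Fin m) : IsAddTorsionFree (V k) := .of_module_rat _
    refine ⟨⟨y, y.2, fun k hk => ?_⟩, rfl⟩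
    have hzk : (z : ∀ k, V k) k = 0 := z.2.2 k hk
    rw [show (z : ∀ k, V k) = n • (y : ∀ k, V k) from congrArg Subtype.val hz,
      Pi.smul_apply] at hzk
    exact (nsmul_eq_zero_iff_right hn).mp hzk

/-- Let `W₁, …, W_m` be finite groups, `V_i` a finite-dimensional
`ℚ`-representation of `W_i`, `V = V₁ ⊕ ⋯ ⊕ V_m` with the product action of
`W = W₁ × ⋯ × W_m`, and let `L ⊆ V` be a `W`-invariant finitely generated free abelian
subgroup. If `L` is a quasi-permutation `W`-lattice, then for each `i` the lattice
`L_i = L ∩ V_i` is a quasi-permutation `W_i`-lattice (with `W_i` acting through the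
inclusion `W_i → W`). -/
theorem quasiPermutation_inter_component (m : ℕ) (W : Fin m → Type)
    [∀ i, Group (W i)] [∀ i, Finite (W i)]
    (V : Fin m → Type) [∀ i, AddCommGroup (V i)] [∀ i, Module ℚ (V i)]
    [∀ i, FiniteDimensional ℚ (V i)]
    [∀ i, DistribMulAction (W i) (V i)] [∀ i, SMulCommClass (W i) ℚ (V i)]
    (L : AddSubgroup (∀ k, V k))
    (hinv : ∀ (w : ∀ k, W k) (x : ∀ k, V k), x ∈ L → w • x ∈ L)
    [Module.Free ℤ L] [Module.Finite ℤ L]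
    (hqp : IsQuasiPermutation (Γ := ∀ k, W k)
      (@GammaMod.mk _ _ L _ (subAction L hinv)))
    (i : Fin m) :
    letI : DistribMulAction (W i) (∀ k, V k) :=
      DistribMulAction.compHom _ (MonoidHom.mulSingle W i)
    ∃ hi : ∀ (w : W i) (x : ∀ k, V k), x ∈ Lsect m V L i → w • x ∈ Lsect m V L i,
      IsQuasiPermutation (Γ := W i)
        (@GammaMod.mk _ _ (Lsect m V L i) _ (subAction _ hi)) :=
  quasiPermutation_inter_component_general m W V L hinv hqp i
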